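/- arXiv:1404.0144 — 5 statements merged into one kernel-verified Lean document; each statement's English description precedes it below -/
import Mathlib

section
/- If Z is a modal bisimulation between Kripke models M and M', and teams T ⊆ W and T' ⊆ W' are Z-bisimilar, then for every MIL formula φ (modal logic extended with independence atoms, under team semantics), M,T ⊨ φ if and only if M',T' ⊨ φ. -/
universe u v

structure Kripke (W : Type u) (P : Type v) where
  R : W → W → Prop
  π : W → P → Prop

variable {W W' : Type u} {P : Type v}

def Kripke.succ (M : Kripke W P) (T : Set W) : Set W := {v | ∃ w ∈ T, M.R w v}

def Kripke.agree (M : Kripke W P) (l : List P) (w w' : W) : Prop :=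
  ∀ p ∈ l, (M.π w p ↔ M.π w' p)

def Bisim (M : Kripke W P) (M' : Kripke W' P) (Z : W → W' → Prop) : Prop :=
  ∀ w w', Z w w' →
    (∀ p, M.π w p ↔ M'.π w' p) ∧
    (∀ v, M.R w v → ∃ v', M'.R w' v' ∧ Z v v') ∧
    (∀ v', M'.R w' v' → ∃ v, M.R w v ∧ Z v v')

def TeamBisim (Z : W → W' → Prop) (T : Set W) (T' : Set W') : Prop :=
  (∀ w ∈ T, ∃ w' ∈ T', Z w w') ∧ (∀ w' ∈ T', ∃ w ∈ T, Z w w')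

inductive MIL (P : Type v) where
  | atom : P → MIL P
  | natom : P → MIL P
  | indep : List P → List P → List P → MIL P
  | and : MIL P → MIL P → MIL P
  | or : MIL P → MIL P → MIL P
  | dia : MIL P → MIL P
  | box : MIL P → MIL P

def MIL.sat (M : Kripke W P) : MIL P → Set W → Prop
  | .atom p, T => ∀ w ∈ T, M.π w p
  | .natom p, T => ∀ w ∈ T, ¬ M.π w p
  | .indep p1 r p2, T => ∀ w ∈ T, ∀ w' ∈ T, M.agree r w w' →
      ∃ w'' ∈ T, M.agree p1 w'' w ∧ M.agree p2 w'' w' ∧ M.agree r w'' w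
  | .and φ ψ, T => φ.sat M T ∧ ψ.sat M T
  | .or φ ψ, T => ∃ T1 T2, T1 ∪ T2 = T ∧ φ.sat M T1 ∧ ψ.sat M T2
  | .dia φ, T => ∃ T', T' ⊆ M.succ T ∧ (∀ w ∈ T, ∃ v ∈ T', M.R w v) ∧ φ.sat M T'
  | .box φ, T => φ.sat M (M.succ T)

lemma bisim_flip (M : Kripke W P) (M' : Kripke W' P) (Z : W → W' → Prop)
    (hZ : Bisim M M' Z) : Bisim M' M (fun w' w => Z w w') := by
  intro w' w h
  obtain ⟨ha, hf, hb⟩ := hZ w w' h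
  exact ⟨fun p => (ha p).symm, hb, hf⟩

lemma agree_transfer (M : Kripke W P) (M' : Kripke W' P) (Z : W → W' → Prop)
    (hZ : Bisim M M' Z) {l : List P} {w1 w2 : W} {w1' w2' : W'}
    (h1 : Z w1 w1') (h2 : Z w2 w2') (h : M.agree l w1 w2) : M'.agree l w1' w2' := by
  intro p hp
  rw [← (hZ w1 w1' h1).1 p, ← (hZ w2 w2' h2).1 p]
  exact h p hp

lemma mil_sat_mono (M : Kripke W P) (M' : Kripke W' P) (Z : W → W' → Prop)
    (hZ : Bisim M M' Z) (φ : MIL P) :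
    ∀ T T', TeamBisim Z T T' → φ.sat M T → φ.sat M' T' := by
  induction φ with
  | atom p =>
    intro T T' hT h w' hw'
    obtain ⟨w, hw, hzw⟩ := hT.2 w' hw'
    exact ((hZ w w' hzw).1 p).mp (h w hw)
  | natom p =>
    intro T T' hT h w' hw' hc
    obtain ⟨w, hw, hzw⟩ := hT.2 w' hw'
    exact h w hw (((hZ w w' hzw).1 p).mpr hc)
  | indep p1 r p2 =>
    intro T T' hT h w1' hw1' w2' hw2' hag
    obtain ⟨w1, hw1, hz1⟩ := hT.2 w1' hw1'
    obtain ⟨w2, hw2, hz2⟩ := hT.2 w2' hw2'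
    have hag' : M.agree r w1 w2 :=
      agree_transfer M' M (fun w' w => Z w w') (bisim_flip M M' Z hZ) hz1 hz2 hag
    obtain ⟨w3, hw3, ha1, ha2, ha3⟩ := h w1 hw1 w2 hw2 hag'
    obtain ⟨w3', hw3', hz3⟩ := hT.1 w3 hw3
    exact ⟨w3', hw3', agree_transfer M M' Z hZ hz3 hz1 ha1,
      agree_transfer M M' Z hZ hz3 hz2 ha2, agree_transfer M M' Z hZ hz3 hz1 ha3⟩
  | and φ ψ ihφ ihψ =>
    intro T T' hT h
    exact ⟨ihφ T T' hT h.1, ihψ T T' hT h.2⟩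
  | or φ ψ ihφ ihψ =>
    intro T T' hT h
    obtain ⟨T1, T2, hUn, h1, h2⟩ := h
    refine ⟨{w' ∈ T' | ∃ w ∈ T1, Z w w'}, {w' ∈ T' | ∃ w ∈ T2, Z w w'}, ?_, ?_, ?_⟩
    · ext w'
      constructor
      · rintro (⟨hw', _⟩ | ⟨hw', _⟩) <;> exact hw'
      · intro hw'
        obtain ⟨w, hw, hz⟩ := hT.2 w' hw'
        rw [← hUn] at hw
        rcases hw with hw | hw
        · exact Or.inl ⟨hw', w, hw, hz⟩
        · exact Or.inr ⟨hw', w, hw, hz⟩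
    · refine ihφ T1 _ ⟨?_, ?_⟩ h1
      · intro w hw
        obtain ⟨w', hw', hz⟩ := hT.1 w (hUn ▸ Set.mem_union_left T2 hw)
        exact ⟨w', ⟨hw', w, hw, hz⟩, hz⟩
      · rintro w' ⟨_, w, hw, hz⟩
        exact ⟨w, hw, hz⟩
    · refine ihψ T2 _ ⟨?_, ?_⟩ h2
      · intro w hw
        obtain ⟨w', hw', hz⟩ := hT.1 w (hUn ▸ Set.mem_union_right T1 hw)
        exact ⟨w', ⟨hw', w, hw, hz⟩, hz⟩
      · rintro w' ⟨_, w, hw, hz⟩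
        exact ⟨w, hw, hz⟩
  | dia φ ih =>
    intro T T' hT h
    obtain ⟨S, hS, hall, hsat⟩ := h
    refine ⟨{v' | (∃ w' ∈ T', M'.R w' v') ∧ ∃ v ∈ S, Z v v'}, ?_, ?_, ?_⟩
    · rintro v' ⟨⟨w', hw', hr⟩, _⟩
      exact ⟨w', hw', hr⟩
    · intro w' hw'
      obtain ⟨w, hw, hz⟩ := hT.2 w' hw'
      obtain ⟨v, hv, hr⟩ := hall w hw
      obtain ⟨v', hr', hz'⟩ := (hZ w w' hz).2.1 v hr
      exact ⟨v', ⟨⟨w', hw', hr'⟩, v, hv, hz'⟩, hr'⟩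
    · refine ih S _ ⟨?_, ?_⟩ hsat
      · intro v hv
        obtain ⟨w, hw, hr⟩ := hS hv
        obtain ⟨w', hw', hz⟩ := hT.1 w hw
        obtain ⟨v', hr', hz'⟩ := (hZ w w' hz).2.1 v hr
        exact ⟨v', ⟨⟨w', hw', hr'⟩, v, hv, hz'⟩, hz'⟩
      · rintro v' ⟨_, v, hv, hz⟩
        exact ⟨v, hv, hz⟩
  | box φ ih =>
    intro T T' hT h
    refine ih (M.succ T) (M'.succ T') ⟨?_, ?_⟩ h
    · rintro v ⟨w, hw, hr⟩
      obtain ⟨w', hw', hz⟩ := hT.1 w hw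
      obtain ⟨v', hr', hz'⟩ := (hZ w w' hz).2.1 v hr
      exact ⟨v', ⟨w', hw', hr'⟩, hz'⟩
    · rintro v' ⟨w', hw', hr'⟩
      obtain ⟨w, hw, hz⟩ := hT.2 w' hw'
      obtain ⟨v, hr, hz'⟩ := (hZ w w' hz).2.2 v' hr'
      exact ⟨v, ⟨w, hw, hr⟩, hz'⟩

theorem mil_invariant_under_bisimulation (M : Kripke W P) (M' : Kripke W' P)
    (Z : W → W' → Prop) (T : Set W) (T' : Set W')
    (hZ : Bisim M M' Z) (hT : TeamBisim Z T T') (φ : MIL P) :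
    φ.sat M T ↔ φ.sat M' T' := by
  constructor
  · exact mil_sat_mono M M' Z hZ φ T T' hT
  · exact mil_sat_mono M' M (fun w' w => Z w w') (bisim_flip M M' Z hZ) φ T' T ⟨hT.2, hT.1⟩
end

section
/- The independence atom is invariant under team bisimulation: if Z is a modal bisimulation between M and M', and teams T, T' are Z-bisimilar, then M,T ⊨ p̄₁ ⊥_{r̄} p̄₂ iff M',T' ⊨ p̄₁ ⊥_{r̄} p̄₂. -/
universe u v

variable {W W' : Type u} {P : Type v}

lemma indep_forward (M : Kripke W P) (M' : Kripke W' P)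
    (Z : W → W' → Prop) (T : Set W) (T' : Set W')
    (hZ : Bisim M M' Z) (hT : TeamBisim Z T T') (p1 r p2 : List P)
    (h : (MIL.indep p1 r p2).sat M T) : (MIL.indep p1 r p2).sat M' T' := by
  intro w' hw' v' hv' hag
  obtain ⟨w, hw, hZw⟩ := hT.2 w' hw'
  obtain ⟨v, hv, hZv⟩ := hT.2 v' hv'
  have lw := (hZ w w' hZw).1
  have lv := (hZ v v' hZv).1
  have hag' : M.agree r w v := fun p hp => (lw p).trans ((hag p hp).trans (lv p).symm)
  obtain ⟨u, hu, h1, h2, h3⟩ := h w hw v hv hag'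
  obtain ⟨u', hu', hZu⟩ := hT.1 u hu
  have lu := (hZ u u' hZu).1
  exact ⟨u', hu',
    fun p hp => (lu p).symm.trans (((h1 p hp).trans (lw p))),
    fun p hp => (lu p).symm.trans (((h2 p hp).trans (lv p))),
    fun p hp => (lu p).symm.trans (((h3 p hp).trans (lw p)))⟩

theorem indep_invariant_under_bisimulation (M : Kripke W P) (M' : Kripke W' P)
    (Z : W → W' → Prop) (T : Set W) (T' : Set W')
    (hZ : Bisim M M' Z) (hT : TeamBisim Z T T') (p1 r p2 : List P) :
    (MIL.indep p1 r p2).sat M T ↔ (MIL.indep p1 r p2).sat M' T' := by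
  constructor
  · exact indep_forward M M' Z T T' hZ hT p1 r p2
  · refine indep_forward M' M (fun w' w => Z w w') T' T ?_ ⟨hT.2, hT.1⟩ p1 r p2
    intro w' w hzw
    obtain ⟨hl, hf, hb⟩ := hZ w w' hzw
    exact ⟨fun p => (hl p).symm, hb, hf⟩
end

section
/- The inclusion atom is invariant under team bisimulation: M,T ⊨ p̄ ⊆ q̄ iff M',T' ⊨ p̄ ⊆ q̄, whenever T and T' are Z-bisimilar teams for a modal bisimulation Z between M and M'. -/
universe u v

variable {W W' : Type u} {P : Type v}

def inclSat (M : Kripke W P) (T : Set W) {n : ℕ} (p q : Fin n → P) : Prop :=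
  ∀ w ∈ T, ∃ w' ∈ T, ∀ i, M.π w (p i) ↔ M.π w' (q i)

theorem incl_invariant_under_bisimulation
    (M : Kripke W P) (M' : Kripke W' P) (Z : W → W' → Prop)
    (T : Set W) (T' : Set W') {n : ℕ} (p q : Fin n → P)
    (hZ : Bisim M M' Z) (hT : TeamBisim Z T T') :
    inclSat M T p q ↔ inclSat M' T' p q := by
  constructor
  · intro h w' hw'
    obtain ⟨w, hw, hZw⟩ := hT.2 w' hw'
    obtain ⟨v, hv, hvi⟩ := h w hw
    obtain ⟨v', hv', hZv⟩ := hT.1 v hv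
    exact ⟨v', hv', fun i => ((hZ w w' hZw).1 (p i)).symm.trans ((hvi i).trans ((hZ v v' hZv).1 (q i)))⟩
  · intro h w hw
    obtain ⟨w', hw', hZw⟩ := hT.1 w hw
    obtain ⟨v', hv', hvi⟩ := h w' hw'
    obtain ⟨v, hv, hZv⟩ := hT.2 v' hv'
    exact ⟨v, hv, fun i => ((hZ w w' hZw).1 (p i)).trans ((hvi i).trans ((hZ v v' hZv).1 (q i)).symm)⟩
end

section
/- The generalized dependence atom D = {(0)} (of width 1, true on a team exactly when the team consists of a single world falsifying the variable) is not invariant under team bisimulation: there exist bisimilar pointed models (M,w) and (M',w') such that M,{w} ⊨ □D(x) but M',{w'} ⊭ □D(x). -/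
universe u v

variable {W W' : Type u} {P : Type v}

def Dsat (M : Kripke W P) (T : Set W) (x : P) : Prop :=
  ∃ v, T = {v} ∧ ¬ M.π v x

theorem generalized_atom_not_bisim_invariant :
    ∃ (W W' P : Type) (M : Kripke W P) (M' : Kripke W' P)
      (Z : W → W' → Prop) (w : W) (w' : W') (x : P),
      Bisim M M' Z ∧ Z w w' ∧
      Dsat M (M.succ {w}) x ∧ ¬ Dsat M' (M'.succ {w'}) x := by
  refine ⟨Bool, Option Bool, Unit,
    ⟨fun a b => a = false ∧ b = true, fun _ _ => False⟩,
    ⟨fun a b => a = none ∧ b ≠ none, fun _ _ => False⟩,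
    fun a b => (a = false ∧ b = none) ∨ (a = true ∧ b ≠ none),
    false, none, (), ?_, Or.inl ⟨rfl, rfl⟩, ?_, ?_⟩
  · rintro a b (⟨rfl, rfl⟩ | ⟨rfl, hb⟩)
    · exact ⟨fun _ => Iff.rfl, fun v ⟨_, hv⟩ => ⟨some true, ⟨rfl, by simp⟩, Or.inr ⟨hv, by simp⟩⟩,
        fun v' ⟨_, hv'⟩ => ⟨true, ⟨rfl, rfl⟩, Or.inr ⟨rfl, hv'⟩⟩⟩
    · exact ⟨fun _ => Iff.rfl, fun v ⟨h, _⟩ => absurd h (by simp),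
        fun v' ⟨h, _⟩ => absurd h hb⟩
  · refine ⟨true, ?_, fun h => h⟩
    ext v
    constructor
    · rintro ⟨w, hw, rfl, rfl⟩; rfl
    · rintro rfl; exact ⟨false, rfl, rfl, rfl⟩
  · rintro ⟨v, hv, -⟩
    have h1 : (some true : Option Bool) ∈
        Kripke.succ (⟨fun a b => a = none ∧ b ≠ none, fun _ _ => False⟩ :
          Kripke (Option Bool) Unit) {none} := ⟨none, rfl, rfl, by simp⟩
    have h2 : (some false : Option Bool) ∈
        Kripke.succ (⟨fun a b => a = none ∧ b ≠ none, fun _ _ => False⟩ :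
          Kripke (Option Bool) Unit) {none} := ⟨none, rfl, rfl, by simp⟩
    rw [hv] at h1 h2
    simp only [Set.mem_singleton_iff] at h1 h2
    rw [← h2] at h1
    exact absurd h1 (by simp)
end

section
/- The ◇ case of bisimulation invariance: let Z be a modal bisimulation between M and M', let T, T' be Z-bisimilar teams, and let U ⊆ R(T) be a team such that every w ∈ T has an R-successor in U. Then there exists a team U' ⊆ R'(T') such that every w' ∈ T' has an R'-successor in U', and U and U' are Z-bisimilar. -/
universe u v

variable {W W' : Type u} {P : Type v}

theorem dia_case_bisim (M : Kripke W P) (M' : Kripke W' P)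
    (Z : W → W' → Prop) (T : Set W) (T' : Set W') (U : Set W)
    (hZ : Bisim M M' Z) (hT : TeamBisim Z T T')
    (hU : U ⊆ M.succ T) (hcov : ∀ w ∈ T, ∃ v ∈ U, M.R w v) :
    ∃ U' : Set W', U' ⊆ M'.succ T' ∧
      (∀ w' ∈ T', ∃ v' ∈ U', M'.R w' v') ∧ TeamBisim Z U U' := by
  refine ⟨{v' | v' ∈ M'.succ T' ∧ ∃ v ∈ U, Z v v'}, fun v' h => h.1, ?_, ?_, ?_⟩
  · intro w' hw'
    obtain ⟨w, hw, hzw⟩ := hT.2 w' hw'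
    obtain ⟨v, hv, hr⟩ := hcov w hw
    obtain ⟨v', hr', hzv⟩ := (hZ w w' hzw).2.1 v hr
    exact ⟨v', ⟨⟨w', hw', hr'⟩, v, hv, hzv⟩, hr'⟩
  · intro v hv
    obtain ⟨w, hw, hr⟩ := hU hv
    obtain ⟨w', hw', hzw⟩ := hT.1 w hw
    obtain ⟨v', hr', hzv⟩ := (hZ w w' hzw).2.1 v hr
    exact ⟨v', ⟨⟨w', hw', hr'⟩, v, hv, hzv⟩, hzv⟩
  · rintro v' ⟨-, v, hv, hzv⟩
    exact ⟨v, hv, hzv⟩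
end
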